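/- arXiv:2512.08374 — 4 statements merged into one kernel-verified Lean document; each statement's English description precedes it below -/
import Mathlib

section
/- Let E be a real inner product space and let h₁, h₂, Δ₁, Δ₂ ∈ E be nonzero vectors with ‖Δ₁‖ = ‖Δ₂‖ = C, angle(h₁, Δ₁) = angle(h₂, Δ₂) = φ ∈ (0, π), ‖h₁‖ > ‖h₂‖ > 0, and ‖h₂‖ + C·cos(φ) > 0. Then angle(h₁, h₁ + Δ₁) < angle(h₂, h₂ + Δ₂): the higher-norm state rotates by a strictly smaller angle under its residual update. -/
open InnerProductGeometry

/-!
Writing `t = ‖h‖ + C cos φ` and `s = C sin φ` for the components of `h + Δ` along and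
orthogonal to `h`, one gets `cos (angle h (h + Δ)) = t / √(t² + s²)`. Since `s > 0` is the
same for both states, this is `sin (arctan (t / s))`, strictly increasing in `t`, hence in `‖h‖`.
-/

theorem strictMono_div_sqrt_sq_add_sq {s : ℝ} (hs : 0 < s) :
    StrictMono fun t : ℝ => t / √(t ^ 2 + s ^ 2) := by
  have h : (fun t : ℝ => t / √(t ^ 2 + s ^ 2)) = fun t => Real.sin (Real.arctan (t / s)) := by
    ext t
    have hsq : 1 + (t / s) ^ 2 = (t ^ 2 + s ^ 2) / s ^ 2 := by field_simp; ring
    rw [Real.sin_arctan, hsq, Real.sqrt_div' _ (sq_nonneg s), Real.sqrt_sq hs.le,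
      div_div_div_cancel_right₀ hs.ne']
  rw [h]
  exact Real.sin_arctan_strictMono.comp (strictMono_div_right_of_pos hs)

namespace InnerProductGeometry

variable {V : Type*} [NormedAddCommGroup V] [InnerProductSpace ℝ V]

theorem norm_add_sq_eq_sq_add_sq_of_angle (x y : V) :
    ‖x + y‖ ^ 2 =
      (‖x‖ + ‖y‖ * Real.cos (angle x y)) ^ 2 + (‖y‖ * Real.sin (angle x y)) ^ 2 := by
  rw [norm_add_sq_real, ← cos_angle_mul_norm_mul_norm]
  linear_combination -‖y‖ ^ 2 * Real.sin_sq_add_cos_sq (angle x y)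

theorem cos_angle_self_add {x : V} (hx : x ≠ 0) (y : V) :
    Real.cos (angle x (x + y)) = (‖x‖ + ‖y‖ * Real.cos (angle x y)) / ‖x + y‖ := by
  rw [cos_angle, inner_add_right, real_inner_self_eq_norm_sq, ← cos_angle_mul_norm_mul_norm]
  field_simp [norm_ne_zero_iff.2 hx]

theorem cos_angle_self_add_eq_div_sqrt {x : V} (hx : x ≠ 0) (y : V) :
    Real.cos (angle x (x + y)) =
      (‖x‖ + ‖y‖ * Real.cos (angle x y)) /
        √((‖x‖ + ‖y‖ * Real.cos (angle x y)) ^ 2 + (‖y‖ * Real.sin (angle x y)) ^ 2) := by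
  rw [cos_angle_self_add hx, ← norm_add_sq_eq_sq_add_sq_of_angle, Real.sqrt_sq (norm_nonneg _)]

theorem angle_lt_angle_of_cos_lt_cos {x y x' y' : V}
    (h : Real.cos (angle x' y') < Real.cos (angle x y)) : angle x y < angle x' y' :=
  (Real.strictAntiOn_cos.lt_iff_gt ⟨angle_nonneg x' y', angle_le_pi x' y'⟩
    ⟨angle_nonneg x y, angle_le_pi x y⟩).1 h

end InnerProductGeometry

theorem angle_update_lt_of_norm_gt_general {E : Type*} [NormedAddCommGroup E] [InnerProductSpace ℝ E]
    (h₁ h₂ Δ₁ Δ₂ : E) (C φ : ℝ)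
    (hh₁ : h₁ ≠ 0) (hh₂ : h₂ ≠ 0) (hΔ₁ : Δ₁ ≠ 0)
    (hC₁ : ‖Δ₁‖ = C) (hC₂ : ‖Δ₂‖ = C)
    (hφ₁ : angle h₁ Δ₁ = φ) (hφ₂ : angle h₂ Δ₂ = φ)
    (hφ0 : 0 < φ) (hφπ : φ < Real.pi)
    (hn : ‖h₁‖ > ‖h₂‖) :
    angle h₁ (h₁ + Δ₁) < angle h₂ (h₂ + Δ₂) := by
  have hC : 0 < C := hC₁ ▸ norm_pos_iff.2 hΔ₁
  have hs : 0 < C * Real.sin φ := mul_pos hC (Real.sin_pos_of_pos_of_lt_pi hφ0 hφπ)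
  apply angle_lt_angle_of_cos_lt_cos
  rw [cos_angle_self_add_eq_div_sqrt hh₁, cos_angle_self_add_eq_div_sqrt hh₂, hC₁, hC₂, hφ₁, hφ₂]
  exact strictMono_div_sqrt_sq_add_sq hs (by linarith)

/-- Representational inertia: under residual updates of equal magnitude `C` forming
equal angles `φ` with their hidden states, the higher-norm state rotates strictly less. -/
theorem angle_update_lt_of_norm_gt {E : Type*} [NormedAddCommGroup E] [InnerProductSpace ℝ E]
    (h₁ h₂ Δ₁ Δ₂ : E) (C φ : ℝ)
    (hh₁ : h₁ ≠ 0) (hh₂ : h₂ ≠ 0) (hΔ₁ : Δ₁ ≠ 0) (hΔ₂ : Δ₂ ≠ 0)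
    (hC₁ : ‖Δ₁‖ = C) (hC₂ : ‖Δ₂‖ = C)
    (hφ₁ : angle h₁ Δ₁ = φ) (hφ₂ : angle h₂ Δ₂ = φ)
    (hφ0 : 0 < φ) (hφπ : φ < Real.pi)
    (hn : ‖h₁‖ > ‖h₂‖) (hn₂ : ‖h₂‖ > 0)
    (hpos : ‖h₂‖ + C * Real.cos φ > 0) :
    angle h₁ (h₁ + Δ₁) < angle h₂ (h₂ + Δ₂) :=
  angle_update_lt_of_norm_gt_general h₁ h₂ Δ₁ Δ₂ C φ hh₁ hh₂ hΔ₁ hC₁ hC₂ hφ₁ hφ₂ hφ0 hφπ hn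
end

section
/- Let θ₁, θ₂ ∈ (0, π/2) with θ₁ ≠ θ₂, and let θ* ∈ (0, π/2) satisfy tan(θ*)² = tan(θ₁)·tan(θ₂). Then cos(θ₁)·cos(θ₂) < cos(θ*)²: for a fixed geometric mean of angular velocities, the similarity retention factor γ = cos(θ₁)cos(θ₂) is strictly smaller in the asymmetric case than in the symmetric (balanced) case. -/
/-!
Multiplying by `1 + tan θ₁ tan θ₂` turns `cos θ₁ cos θ₂` into `cos (θ₁ - θ₂)`, which is `< 1`
when `θ₁ ≠ θ₂`, whereas it turns `cos² θ*` into `cos² θ* (1 + tan² θ*) = 1`.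
-/

open Real Set

lemma cos_mul_cos_mul_one_add_tan_mul_tan {x y : ℝ} (hx : cos x ≠ 0) (hy : cos y ≠ 0) :
    cos x * cos y * (1 + tan x * tan y) = cos (x - y) := by
  rw [cos_sub, tan_eq_sin_div_cos, tan_eq_sin_div_cos]
  field_simp

lemma cos_lt_one_of_ne_zero_of_abs_lt {x : ℝ} (hx : x ≠ 0) (hx' : |x| < 2 * π) : cos x < 1 :=
  (cos_le_one x).lt_of_ne fun h ↦
    hx ((cos_eq_one_iff_of_lt_of_lt (neg_lt_of_abs_lt hx') (lt_of_abs_lt hx')).mp h)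

lemma cos_mul_cos_mul_one_add_tan_mul_tan_lt_one {x y : ℝ} (hx : x ∈ Ioo (-(π / 2)) (π / 2))
    (hy : y ∈ Ioo (-(π / 2)) (π / 2)) (hxy : x ≠ y) :
    cos x * cos y * (1 + tan x * tan y) < 1 := by
  rw [cos_mul_cos_mul_one_add_tan_mul_tan (cos_pos_of_mem_Ioo hx).ne'
    (cos_pos_of_mem_Ioo hy).ne']
  refine cos_lt_one_of_ne_zero_of_abs_lt (sub_ne_zero.mpr hxy) (abs_lt.mpr ⟨?_, ?_⟩) <;>
    linarith [hx.1, hx.2, hy.1, hy.2, pi_pos]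

lemma cos_sq_mul_one_add_tan_sq {x : ℝ} (hx : cos x ≠ 0) : cos x ^ 2 * (1 + tan x ^ 2) = 1 := by
  rw [← inv_one_add_tan_sq hx, inv_mul_cancel₀ (by positivity)]

/-- Asymmetry strictly decreases the retention factor: for `θ₁ ≠ θ₂` in `(0, π/2)`
and `θ*` with the same geometric mean of tangents, `cos θ₁ cos θ₂ < cos² θ*`. -/
theorem retention_lt_of_asymmetric (θ₁ θ₂ θs : ℝ)
    (h₁ : θ₁ ∈ Set.Ioo 0 (Real.pi / 2)) (h₂ : θ₂ ∈ Set.Ioo 0 (Real.pi / 2))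
    (hs : θs ∈ Set.Ioo 0 (Real.pi / 2)) (hne : θ₁ ≠ θ₂)
    (htan : Real.tan θs ^ 2 = Real.tan θ₁ * Real.tan θ₂) :
    Real.cos θ₁ * Real.cos θ₂ < Real.cos θs ^ 2 := by
  have hmem {θ : ℝ} (h : θ ∈ Ioo 0 (π / 2)) : θ ∈ Ioo (-(π / 2)) (π / 2) :=
    ⟨by linarith [h.1, pi_pos], h.2⟩
  have hpos : 0 < 1 + tan θ₁ * tan θ₂ := htan ▸ by positivity
  refine lt_of_mul_lt_mul_right ?_ hpos.le
  calc cos θ₁ * cos θ₂ * (1 + tan θ₁ * tan θ₂)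
      < 1 := cos_mul_cos_mul_one_add_tan_mul_tan_lt_one (hmem h₁) (hmem h₂) hne
    _ = cos θs ^ 2 * (1 + tan θ₁ * tan θ₂) := by
      rw [← htan, cos_sq_mul_one_add_tan_sq (cos_pos_of_mem_Ioo (hmem hs)).ne']
end

section
/- Let (Ω, P) be a probability space, let E = ℝ^d be a finite-dimensional real inner product space, fix unit vectors u, v ∈ E and real angles θ_u, θ_v, and let W_u, W_v : Ω → E be random vectors satisfying, almost surely, ‖W_u‖ = 1, ‖W_v‖ = 1, ⟨W_u, u⟩ = 0, and ⟨W_v, v⟩ = 0, with E[W_u] = 0, E[W_v] = 0, and W_u independent of W_v. Define U = cos(θ_u)·u + sin(θ_u)·W_u and V = cos(θ_v)·v + sin(θ_v)·W_v. Then |E[⟨U, V⟩]| ≤ |⟨u, v⟩|, and the inequality is strict whenever ⟨u, v⟩ ≠ 0 and |cos(θ_u)·cos(θ_v)| < 1. -/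
/-! Independence turns `𝔼⟪U, V⟫` into `⟪𝔼U, 𝔼V⟫`, and since the updates have mean zero,
`𝔼U = cos θu • u` and `𝔼V = cos θv • v`. Hence `𝔼⟪U, V⟫ = γ ⟪u, v⟫` with
`γ = cos θu cos θv`, and `|γ| ≤ 1`. -/

open MeasureTheory ProbabilityTheory
open scoped RealInnerProductSpace

section

variable {Ω E : Type*} [MeasurableSpace Ω] {μ : Measure Ω}
  [NormedAddCommGroup E] [InnerProductSpace ℝ E] [CompleteSpace E] {X Y : Ω → E}

theorem integral_const_smul_add_smul [IsProbabilityMeasure μ] (u : E) (a b : ℝ)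
    (hX : Integrable X μ) :
    ∫ ω, a • u + b • X ω ∂μ = a • u + b • ∫ ω, X ω ∂μ := by
  rw [integral_add (g := fun ω ↦ b • X ω) (integrable_const _) (hX.smul b), integral_const,
    integral_smul, probReal_univ, one_smul]

variable [MeasurableSpace E] [BorelSpace E]

theorem ProbabilityTheory.IndepFun.integral_inner (hXY : X ⟂ᵢ[μ] Y) (hX : Integrable X μ)
    (hY : Integrable Y μ) :
    ∫ ω, ⟪X ω, Y ω⟫ ∂μ = ⟪∫ ω, X ω ∂μ, ∫ ω, Y ω ∂μ⟫ :=
  hXY.integral_bilin hX hY (innerSL ℝ)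

theorem ProbabilityTheory.IndepFun.integral_inner_smul_add_smul [IsProbabilityMeasure μ]
    (hXY : X ⟂ᵢ[μ] Y) (hX : Integrable X μ) (hY : Integrable Y μ)
    (hX₀ : ∫ ω, X ω ∂μ = 0) (hY₀ : ∫ ω, Y ω ∂μ = 0) (u v : E) (a b c e : ℝ) :
    ∫ ω, ⟪a • u + b • X ω, c • v + e • Y ω⟫ ∂μ = a * c * ⟪u, v⟫ := by
  have hXY' : (fun ω ↦ a • u + b • X ω) ⟂ᵢ[μ] (fun ω ↦ c • v + e • Y ω) :=
    hXY.comp ((measurable_id.const_smul b).const_add (a • u))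
      ((measurable_id.const_smul e).const_add (c • v))
  rw [hXY'.integral_inner ((integrable_const _).add (hX.smul b))
      ((integrable_const _).add (hY.smul e)),
    integral_const_smul_add_smul u a b hX, integral_const_smul_add_smul v c e hY, hX₀, hY₀]
  simp only [smul_zero, add_zero, real_inner_smul_left, real_inner_smul_right]
  ring

end

theorem abs_expected_inner_update_le_general {d : ℕ} {Ω : Type*} [MeasurableSpace Ω]
    (P : Measure Ω) [IsProbabilityMeasure P]
    (u v : EuclideanSpace ℝ (Fin d))
    (θu θv : ℝ)
    (Wu Wv : Ω → EuclideanSpace ℝ (Fin d))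
    (hWu_meas : Measurable Wu) (hWv_meas : Measurable Wv)
    (hWu_norm : ∀ᵐ ω ∂P, ‖Wu ω‖ = 1) (hWv_norm : ∀ᵐ ω ∂P, ‖Wv ω‖ = 1)
    (hWu_mean : ∫ ω, Wu ω ∂P = 0) (hWv_mean : ∫ ω, Wv ω ∂P = 0)
    (hindep : ProbabilityTheory.IndepFun Wu Wv P) :
    |∫ ω, ⟪Real.cos θu • u + Real.sin θu • Wu ω,
           Real.cos θv • v + Real.sin θv • Wv ω⟫ ∂P| ≤ |⟪u, v⟫| ∧
    (⟪u, v⟫ ≠ 0 → |Real.cos θu * Real.cos θv| < 1 →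
      |∫ ω, ⟪Real.cos θu • u + Real.sin θu • Wu ω,
             Real.cos θv • v + Real.sin θv • Wv ω⟫ ∂P| < |⟪u, v⟫|) := by
  have hWu_int : Integrable Wu P :=
    .of_bound hWu_meas.aestronglyMeasurable 1 (hWu_norm.mono fun _ h ↦ h.le)
  have hWv_int : Integrable Wv P :=
    .of_bound hWv_meas.aestronglyMeasurable 1 (hWv_norm.mono fun _ h ↦ h.le)
  have hγ : |Real.cos θu * Real.cos θv| ≤ 1 := by
    rw [abs_mul]
    exact mul_le_one₀ (Real.abs_cos_le_one θu) (abs_nonneg _) (Real.abs_cos_le_one θv)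
  rw [hindep.integral_inner_smul_add_smul hWu_int hWv_int hWu_mean hWv_mean, abs_mul]
  exact ⟨mul_le_of_le_one_left (abs_nonneg _) hγ,
    fun huv hlt ↦ mul_lt_of_lt_one_left (abs_pos.2 huv) hlt⟩

/-- Similarity decay: under zero-mean orthogonal rotational updates, the expected
cosine similarity cannot increase in magnitude across a Pre-Norm layer, and it
strictly decays whenever `⟪u, v⟫ ≠ 0` and `|cos θ_u · cos θ_v| < 1`. -/
theorem abs_expected_inner_update_le {d : ℕ} {Ω : Type*} [MeasurableSpace Ω]
    (P : Measure Ω) [IsProbabilityMeasure P]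
    (u v : EuclideanSpace ℝ (Fin d)) (hu : ‖u‖ = 1) (hv : ‖v‖ = 1)
    (θu θv : ℝ)
    (Wu Wv : Ω → EuclideanSpace ℝ (Fin d))
    (hWu_meas : Measurable Wu) (hWv_meas : Measurable Wv)
    (hWu_norm : ∀ᵐ ω ∂P, ‖Wu ω‖ = 1) (hWv_norm : ∀ᵐ ω ∂P, ‖Wv ω‖ = 1)
    (hWu_orth : ∀ᵐ ω ∂P, ⟪Wu ω, u⟫ = 0) (hWv_orth : ∀ᵐ ω ∂P, ⟪Wv ω, v⟫ = 0)
    (hWu_mean : ∫ ω, Wu ω ∂P = 0) (hWv_mean : ∫ ω, Wv ω ∂P = 0)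
    (hindep : ProbabilityTheory.IndepFun Wu Wv P) :
    |∫ ω, ⟪Real.cos θu • u + Real.sin θu • Wu ω,
           Real.cos θv • v + Real.sin θv • Wv ω⟫ ∂P| ≤ |⟪u, v⟫| ∧
    (⟪u, v⟫ ≠ 0 → |Real.cos θu * Real.cos θv| < 1 →
      |∫ ω, ⟪Real.cos θu • u + Real.sin θu • Wu ω,
             Real.cos θv • v + Real.sin θv • Wv ω⟫ ∂P| < |⟪u, v⟫|) :=
  abs_expected_inner_update_le_general P u v θu θv Wu Wv hWu_meas hWv_meas hWu_norm hWv_norm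
    hWu_mean hWv_mean hindep
end

section
/- Let θ₁, θ₂, θ* ∈ (0, π/2) with θ₁ ≠ θ₂ and tan(θ*)² = tan(θ₁)·tan(θ₂), and let s > 0. Then cos(θ₁)·cos(θ₂)·s < cos(θ*)²·s: if the visual and text tokens start from positive cosine similarity s and rotate with asymmetric angular velocities θ₁ ≠ θ₂ whose geometric mean of tangents matches that of the balanced case θ*, the expected next-layer cosine similarity in the imbalanced case is strictly smaller than in the balanced case. -/
/-- Starting from positive cosine similarity `s`, asymmetric angular velocities
`θ₁ ≠ θ₂` (with the same geometric mean of tangents as the balanced velocity `θ*`)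
yield a strictly smaller expected next-layer similarity: `cos θ₁ cos θ₂ · s < cos² θ* · s`. -/
theorem expected_similarity_lt_of_asymmetric (θ₁ θ₂ θs s : ℝ)
    (h₁ : θ₁ ∈ Set.Ioo 0 (Real.pi / 2)) (h₂ : θ₂ ∈ Set.Ioo 0 (Real.pi / 2))
    (hs : θs ∈ Set.Ioo 0 (Real.pi / 2)) (hne : θ₁ ≠ θ₂)
    (htan : Real.tan θs ^ 2 = Real.tan θ₁ * Real.tan θ₂)
    (hspos : 0 < s) :
    Real.cos θ₁ * Real.cos θ₂ * s < Real.cos θs ^ 2 * s := by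
  have hpi := Real.pi_pos
  have hc₁ : 0 < Real.cos θ₁ :=
    Real.cos_pos_of_mem_Ioo ⟨by linarith [h₁.1], h₁.2⟩
  have hc₂ : 0 < Real.cos θ₂ :=
    Real.cos_pos_of_mem_Ioo ⟨by linarith [h₂.1], h₂.2⟩
  have hcs : 0 < Real.cos θs :=
    Real.cos_pos_of_mem_Ioo ⟨by linarith [hs.1], hs.2⟩
  have ht₁ : (1 + Real.tan θ₁ ^ 2)⁻¹ = Real.cos θ₁ ^ 2 :=
    Real.inv_one_add_tan_sq hc₁.ne'
  have ht₂ : (1 + Real.tan θ₂ ^ 2)⁻¹ = Real.cos θ₂ ^ 2 :=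
    Real.inv_one_add_tan_sq hc₂.ne'
  have hts : (1 + Real.tan θs ^ 2)⁻¹ = Real.cos θs ^ 2 :=
    Real.inv_one_add_tan_sq hcs.ne'
  set t₁ := Real.tan θ₁
  set t₂ := Real.tan θ₂
  have htne : t₁ ≠ t₂ := fun h => hne <| Real.injOn_tan
    ⟨by linarith [h₁.1], h₁.2⟩ ⟨by linarith [h₂.1], h₂.2⟩ h
  have htpos₁ : 0 < t₁ := Real.tan_pos_of_pos_of_lt_pi_div_two h₁.1 h₁.2
  have htpos₂ : 0 < t₂ := Real.tan_pos_of_pos_of_lt_pi_div_two h₂.1 h₂.2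
  have key : (1 + t₁ * t₂) ^ 2 < (1 + t₁ ^ 2) * (1 + t₂ ^ 2) := by
    nlinarith [sq_nonneg (t₁ - t₂), sq_pos_of_ne_zero (sub_ne_zero.mpr htne)]
  have hp₁ : (0:ℝ) < 1 + t₁ ^ 2 := by positivity
  have hp₂ : (0:ℝ) < 1 + t₂ ^ 2 := by positivity
  have hps : (0:ℝ) < 1 + t₁ * t₂ := by positivity
  have hsq : (Real.cos θ₁ * Real.cos θ₂) ^ 2 < (Real.cos θs ^ 2) ^ 2 := by
    have : ((1 + t₁ ^ 2) * (1 + t₂ ^ 2))⁻¹ < ((1 + t₁ * t₂) ^ 2)⁻¹ :=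
      inv_strictAnti₀ (by positivity) key
    calc (Real.cos θ₁ * Real.cos θ₂) ^ 2
        = ((1 + t₁ ^ 2) * (1 + t₂ ^ 2))⁻¹ := by
          rw [mul_inv, ht₁, ht₂]; ring
      _ < ((1 + t₁ * t₂) ^ 2)⁻¹ := this
      _ = (Real.cos θs ^ 2) ^ 2 := by
          rw [← htan, ← hts]; rw [inv_pow]
  have hlt : Real.cos θ₁ * Real.cos θ₂ < Real.cos θs ^ 2 :=
    lt_of_pow_lt_pow_left₀ 2 (by positivity) hsq
  exact mul_lt_mul_of_pos_right hlt hspos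
end
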